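/- arXiv:2212.03552 — 3 statements merged into one kernel-verified Lean document; each statement's English description precedes it below -/
import Mathlib

section
/- Let $B = \mu_2 p + \bar\tau^{tr} + G\Delta t\sqrt{p}\,\xi$ and $H = \bar\tau^{tr}\mu_2 p + G\Delta t\sqrt{p}\,\xi\, p\,\mu_s$, where $p > 0$, $G, \Delta t, \xi > 0$, $0 < \mu_s < \mu_2$, and $\mu_s p < \bar\tau^{tr} < \mu_2 p$. Then $B^2 - 4H > 0$, so the quadratic $x^2 - Bx + H = 0$ has two distinct real roots. -/
theorem stmt3 (p G Δt ξ μs μ2 τtr : ℝ) (hp : 0 < p) (hG : 0 < G)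
    (hΔt : 0 < Δt) (hξ : 0 < ξ) (hμs : 0 < μs) (hμ : μs < μ2)
    (h1 : μs * p < τtr) (h2 : τtr < μ2 * p)
    (B H : ℝ)
    (hB : B = μ2 * p + τtr + G * Δt * Real.sqrt p * ξ)
    (hH : H = τtr * μ2 * p + G * Δt * Real.sqrt p * ξ * p * μs) :
    B ^ 2 - 4 * H > 0 ∧
    ∃ x y : ℝ, x ≠ y ∧ x ^ 2 - B * x + H = 0 ∧ y ^ 2 - B * y + H = 0 := by
  have hs : 0 < Real.sqrt p := Real.sqrt_pos.mpr hp
  have hc : 0 < G * Δt * Real.sqrt p * ξ := by positivity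
  have hD : B ^ 2 - 4 * H > 0 := by
    subst hB hH
    nlinarith [sq_nonneg (μ2 * p - τtr + G * Δt * Real.sqrt p * ξ),
      mul_pos hc (sub_pos.mpr h1)]
  refine ⟨hD, (B + Real.sqrt (B ^ 2 - 4 * H)) / 2,
    (B - Real.sqrt (B ^ 2 - 4 * H)) / 2, ?_, ?_, ?_⟩
  · have : 0 < Real.sqrt (B ^ 2 - 4 * H) := Real.sqrt_pos.mpr hD
    intro h; nlinarith [this]
  all_goals
    have hsq : Real.sqrt (B ^ 2 - 4 * H) ^ 2 = B ^ 2 - 4 * H :=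
      Real.sq_sqrt hD.le
    nlinarith [hsq]
end

section
/- With $B = \mu_2 p + \bar\tau^{tr} + G\Delta t\sqrt{p}\,\xi$ and $H = \bar\tau^{tr}\mu_2 p + G\Delta t\sqrt{p}\,\xi\, p\,\mu_s$, where $p, G, \Delta t, \xi > 0$, $0 < \mu_s < \mu_2$, and $\mu_s p < \bar\tau^{tr} < \mu_2 p$, the smaller root $\bar\tau^{n+1} = \frac{1}{2}(B - \sqrt{B^2 - 4H})$ of $x^2 - Bx + H = 0$ satisfies $\mu_s p < \bar\tau^{n+1} < \mu_2 p$. -/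
theorem stmt4 (p G Δt ξ μs μ2 τtr : ℝ) (hp : 0 < p) (hG : 0 < G)
    (hΔt : 0 < Δt) (hξ : 0 < ξ) (hμs : 0 < μs) (hμ : μs < μ2)
    (h1 : μs * p < τtr) (h2 : τtr < μ2 * p)
    (B H τn : ℝ)
    (hB : B = μ2 * p + τtr + G * Δt * Real.sqrt p * ξ)
    (hH : H = τtr * μ2 * p + G * Δt * Real.sqrt p * ξ * p * μs)
    (hτ : τn = (1 / 2) * (B - Real.sqrt (B ^ 2 - 4 * H))) :
    μs * p < τn ∧ τn < μ2 * p := by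
  have hsp : 0 < Real.sqrt p := Real.sqrt_pos.mpr hp
  have ha : 0 < G * Δt * Real.sqrt p * ξ := by positivity
  set a := G * Δt * Real.sqrt p * ξ with haa
  have hD : 0 < B ^ 2 - 4 * H := by
    have h4 : 0 < a * p * (μ2 - μs) := by
      apply mul_pos (mul_pos ha hp); linarith
    have key : B ^ 2 - 4 * H = (B - 2 * μ2 * p) ^ 2 + 4 * (a * p * (μ2 - μs)) := by
      rw [hB, hH]; ring
    nlinarith [sq_nonneg (B - 2 * μ2 * p), key]
  set s := Real.sqrt (B ^ 2 - 4 * H) with hss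
  have hs0 : 0 ≤ s := Real.sqrt_nonneg _
  have hs2 : s ^ 2 = B ^ 2 - 4 * H := Real.sq_sqrt hD.le
  have hf2 : s ^ 2 - (B - 2 * μ2 * p) ^ 2 = 4 * (a * p * (μ2 - μs)) := by
    rw [hs2, hB, hH]; ring
  have hf1 : (B - 2 * μs * p) ^ 2 - s ^ 2 = 4 * ((μ2 * p - μs * p) * (τtr - μs * p)) := by
    rw [hs2, hB, hH]; ring
  have hpos2 : 0 < a * p * (μ2 - μs) := by
    apply mul_pos (mul_pos ha hp); linarith
  have hpos1 : 0 < (μ2 * p - μs * p) * (τtr - μs * p) := by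
    apply mul_pos <;> nlinarith
  have hBpos : 0 < B - 2 * μs * p := by
    rw [hB]; nlinarith
  constructor
  · -- need s < B - 2 μs p
    have hlt : s ^ 2 < (B - 2 * μs * p) ^ 2 := by linarith
    have habs := abs_lt_of_sq_lt_sq hlt hBpos.le
    have : s < B - 2 * μs * p := lt_of_le_of_lt (le_abs_self s) habs
    rw [hτ]; linarith
  · have : B - 2 * μ2 * p < s := by nlinarith [sq_nonneg (s + (B - 2 * μ2 * p))]
    rw [hτ]; linarith
end

section
/- With $B = \mu_2 p + \bar\tau^{tr} + G\Delta t\sqrt{p}\,\xi$ and $H = \bar\tau^{tr}\mu_2 p + G\Delta t\sqrt{p}\,\xi\,p\,\mu_s$ (parameters as above, $\mu_s p < \bar\tau^{tr} < \mu_2 p$), the smaller root $\bar\tau^{n+1} = \frac{1}{2}(B - \sqrt{B^2-4H})$ satisfies $\bar\tau^{n+1} < \bar\tau^{tr}$. -/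
theorem stmt6 (p G Δt ξ μs μ2 τtr : ℝ) (hp : 0 < p) (hG : 0 < G)
    (hΔt : 0 < Δt) (hξ : 0 < ξ) (hμs : 0 < μs) (hμ : μs < μ2)
    (h1 : μs * p < τtr) (h2 : τtr < μ2 * p)
    (B H τn : ℝ)
    (hB : B = μ2 * p + τtr + G * Δt * Real.sqrt p * ξ)
    (hH : H = τtr * μ2 * p + G * Δt * Real.sqrt p * ξ * p * μs)
    (hτ : τn = (1 / 2) * (B - Real.sqrt (B ^ 2 - 4 * H))) :
    τn < τtr := by
  have hs : 0 < Real.sqrt p := Real.sqrt_pos.mpr hp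
  have hc : 0 < G * Δt * Real.sqrt p * ξ := by positivity
  have key : B - 2 * τtr < Real.sqrt (B ^ 2 - 4 * H) := by
    rw [show (B - 2*τtr) = Real.sqrt ((B - 2*τtr)^2) from (Real.sqrt_sq (by nlinarith)).symm]
    apply Real.sqrt_lt_sqrt (by positivity)
    subst hB hH
    nlinarith [mul_pos hc (sub_pos.mpr h1)]
  rw [hτ]; linarith
end
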